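/- Let (g, ω) be a symplectic Novikov Lie algebra and ∇^ω_x y = (2/3)x·y - (1/3)y·x the associated symplectic connection. Then the Ricci tensor ric(x,y) = tr(z ↦ K(x,z)y), where K(x,y) = [∇^ω_x, ∇^ω_y] - ∇^ω_{[x,y]}, equals (2/9)·tr(ad_x ∘ ad_y). -/

import Mathlib

/-!
Nondegeneracy of `ω` turns the defining relation `ω(x·y, z) = -ω(y, [x,z])` into algebraic
identities for the product: `x·y - y·x = [x,y]` (from the cocycle condition) and left symmetry
(from the Jacobi identity). Together with the Novikov identity these give
`x·[y,z] + y·[z,x] + z·[x,y] = 0`, which, read through `ω`, says that the derived algebra is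
isotropic; hence `L_a` vanishes on `[g,g]`. With these identities the curvature collapses to
`K(x,z) = -(2/9) ad_[x,z]`, and the Ricci trace is `(2/9) tr(ad_y ∘ ad_x)`.
-/

/-- The symplectic connection `∇^ω_x y = (2/3) x·y - (1/3) y·x` associated with an
SNLA with left-symmetric product `mul`. -/
noncomputable def snlaConnMul {g : Type*} [AddCommGroup g] [Module ℝ g]
    (mul : g →ₗ[ℝ] g →ₗ[ℝ] g) (x : g) : Module.End ℝ g :=
  (2 / 3 : ℝ) • mul x - (3⁻¹ : ℝ) • mul.flip x

/-- The curvature `K(x,y) = [∇^ω_x, ∇^ω_y] - ∇^ω_{[x,y]}`. -/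
noncomputable def snlaCurvMul {g : Type*} [LieRing g] [LieAlgebra ℝ g]
    (mul : g →ₗ[ℝ] g →ₗ[ℝ] g) (x y : g) : Module.End ℝ g :=
  snlaConnMul mul x * snlaConnMul mul y - snlaConnMul mul y * snlaConnMul mul x
    - snlaConnMul mul ⁅x, y⁆

section

variable {R g : Type*} [CommRing R] [LieRing g] [LieAlgebra R g]
  {ω : g →ₗ[R] g →ₗ[R] R} {mul : g →ₗ[R] g →ₗ[R] g}

theorem eq_of_separatingLeft (hnondeg : ω.SeparatingLeft) {a b : g}
    (h : ∀ w, ω a w = ω b w) : a = b :=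
  LinearMap.ker_eq_bot.mp (LinearMap.separatingLeft_iff_ker_eq_bot.mp hnondeg) (LinearMap.ext h)

theorem mul_sub_mul_eq_lie (hskew : ∀ x y : g, ω x y = - ω y x) (hnondeg : ω.SeparatingLeft)
    (hcocycle : ∀ x y z : g, ω ⁅x, y⁆ z + ω ⁅y, z⁆ x + ω ⁅z, x⁆ y = 0)
    (hdef : ∀ x y z : g, ω (mul x y) z = - ω y ⁅x, z⁆) (x y : g) :
    mul x y - mul y x = ⁅x, y⁆ := by
  refine eq_of_separatingLeft hnondeg fun w ↦ ?_
  have hwx : ω ⁅w, x⁆ y = ω y ⁅x, w⁆ := by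
    rw [← lie_skew w x, map_neg, LinearMap.neg_apply, hskew, neg_neg]
  rw [map_sub, LinearMap.sub_apply, hdef, hdef]
  linear_combination -hcocycle x y w + hskew x ⁅y, w⁆ + hwx

theorem mul_mul_sub_mul_mul_comm (hnondeg : ω.SeparatingLeft)
    (hdef : ∀ x y z : g, ω (mul x y) z = - ω y ⁅x, z⁆)
    (hcomm : ∀ x y : g, mul x y - mul y x = ⁅x, y⁆) (x y z : g) :
    mul (mul x y) z - mul x (mul y z) = mul (mul y x) z - mul y (mul x z) := by
  refine eq_of_separatingLeft hnondeg fun w ↦ ?_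
  have hjacobi : ω z ⁅mul x y - mul y x, w⁆ = ω z (⁅x, ⁅y, w⁆⁆ - ⁅y, ⁅x, w⁆⁆) := by
    rw [hcomm, lie_lie]
  simp only [map_sub, LinearMap.sub_apply, hdef, sub_lie] at hjacobi ⊢
  linear_combination -hjacobi

theorem mul_lie_add_mul_lie_add_mul_lie
    (hcomm : ∀ x y : g, mul x y - mul y x = ⁅x, y⁆)
    (hls : ∀ x y z : g,
      mul (mul x y) z - mul x (mul y z) = mul (mul y x) z - mul y (mul x z))
    (hNov : ∀ x y z : g, mul (mul x y) z = mul (mul x z) y) (x y z : g) :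
    mul x ⁅y, z⁆ + mul y ⁅z, x⁆ + mul z ⁅x, y⁆ = 0 := by
  simp only [← hcomm, map_sub]
  linear_combination (norm := abel)
    -hls x y z - hls y z x - hls z x y + hNov x y z + hNov y z x + hNov z x y

theorem omega_lie_lie_eq_zero [IsAddTorsionFree R] (hskew : ∀ x y : g, ω x y = - ω y x)
    (hdef : ∀ x y z : g, ω (mul x y) z = - ω y ⁅x, z⁆)
    (hcyc : ∀ x y z : g, mul x ⁅y, z⁆ + mul y ⁅z, x⁆ + mul z ⁅x, y⁆ = 0) (a b c d : g) :
    ω ⁅a, b⁆ ⁅c, d⁆ = 0 := by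
  have hbianchi (x y z w : g) :
      ω ⁅y, z⁆ ⁅x, w⁆ + ω ⁅z, x⁆ ⁅y, w⁆ + ω ⁅x, y⁆ ⁅z, w⁆ = 0 := by
    have := congrArg (ω · w) (hcyc x y z)
    simp only [map_add, LinearMap.add_apply, hdef, map_zero, LinearMap.zero_apply] at this
    linear_combination -this
  have hdc : ω ⁅a, b⁆ ⁅d, c⁆ = - ω ⁅a, b⁆ ⁅c, d⁆ := by
    rw [← lie_skew d c, map_neg]
  have hda : ω ⁅d, a⁆ ⁅b, c⁆ = ω ⁅b, c⁆ ⁅a, d⁆ := by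
    rw [← lie_skew d a, map_neg, LinearMap.neg_apply, hskew ⁅a, d⁆, neg_neg]
  have hbd : ω ⁅b, d⁆ ⁅a, c⁆ = ω ⁅c, a⁆ ⁅b, d⁆ := by
    rw [← lie_skew c a, map_neg, LinearMap.neg_apply, hskew ⁅a, c⁆, neg_neg]
  refine two_nsmul_eq_zero.mp ?_
  rw [two_nsmul]
  linear_combination hbianchi a b c d - hbianchi a b d c + hdc + hda + hbd

theorem mul_lie_eq_zero (hnondeg : ω.SeparatingLeft)
    (hdef : ∀ x y z : g, ω (mul x y) z = - ω y ⁅x, z⁆)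
    (hiso : ∀ a b c d : g, ω ⁅a, b⁆ ⁅c, d⁆ = 0) (a b c : g) :
    mul a ⁅b, c⁆ = 0 :=
  eq_of_separatingLeft hnondeg fun w ↦ by rw [hdef, hiso, map_zero, LinearMap.zero_apply, neg_zero]

end

theorem snlaCurvMul_apply {g : Type*} [LieRing g] [LieAlgebra ℝ g] {mul : g →ₗ[ℝ] g →ₗ[ℝ] g}
    (hcomm : ∀ x y : g, mul x y - mul y x = ⁅x, y⁆)
    (hls : ∀ x y z : g,
      mul (mul x y) z - mul x (mul y z) = mul (mul y x) z - mul y (mul x z))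
    (hNov : ∀ x y z : g, mul (mul x y) z = mul (mul x z) y)
    (hmulLie : ∀ a b c : g, mul a ⁅b, c⁆ = 0) (x z y : g) :
    snlaCurvMul mul x z y = -(2 / 9 : ℝ) • ⁅⁅x, z⁆, y⁆ := by
  have hsymm (a b c : g) : mul a (mul b c) = mul a (mul c b) := by
    rw [← sub_eq_zero, ← map_sub, hcomm, hmulLie]
  simp only [snlaCurvMul, snlaConnMul, LinearMap.sub_apply, LinearMap.smul_apply,
    Module.End.mul_apply, LinearMap.flip_apply, map_sub, map_smul, hmulLie]
  rw [← hcomm ⁅x, z⁆ y, hmulLie, ← hcomm x z]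
  simp only [map_sub, LinearMap.sub_apply]
  -- The Novikov identities cancel the `1/9` terms; left symmetry turns the rest into `[x,z]·y`.
  linear_combination (norm := module) (2 / 9 : ℝ) • hsymm x z y - (2 / 9 : ℝ) • hsymm z x y
    - (2 / 9 : ℝ) • hNov z y x + (2 / 9 : ℝ) • hNov x y z + (1 / 9 : ℝ) • hNov y z x
    - (2 / 9 : ℝ) • hls x z y

theorem snla_stmt_18_general (g : Type*) [LieRing g] [LieAlgebra ℝ g]
    (ω : g →ₗ[ℝ] g →ₗ[ℝ] ℝ)
    (hskew : ∀ x y : g, ω x y = - ω y x)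
    (hnondeg : ∀ x : g, (∀ y : g, ω x y = 0) → x = 0)
    (hcocycle : ∀ x y z : g, ω ⁅x, y⁆ z + ω ⁅y, z⁆ x + ω ⁅z, x⁆ y = 0)
    (mul : g →ₗ[ℝ] g →ₗ[ℝ] g)
    (hdef : ∀ x y z : g, ω (mul x y) z = - ω y ⁅x, z⁆)
    (hNov : ∀ x y z : g, mul (mul x y) z = mul (mul x z) y) :
    ∀ (x y : g) (T : g →ₗ[ℝ] g), (∀ z : g, T z = snlaCurvMul mul x z y) →
      LinearMap.trace ℝ g T
        = (2 / 9 : ℝ)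
            * LinearMap.trace ℝ g (LieAlgebra.ad ℝ g x * LieAlgebra.ad ℝ g y) := by
  intro x y T hT
  have hcomm := mul_sub_mul_eq_lie hskew hnondeg hcocycle hdef
  have hls := mul_mul_sub_mul_mul_comm hnondeg hdef hcomm
  have hmulLie := mul_lie_eq_zero hnondeg hdef
    (omega_lie_lie_eq_zero hskew hdef (mul_lie_add_mul_lie_add_mul_lie hcomm hls hNov))
  have hT_eq : T = (2 / 9 : ℝ) • (LieAlgebra.ad ℝ g y * LieAlgebra.ad ℝ g x) := by
    ext z
    rw [hT, snlaCurvMul_apply hcomm hls hNov hmulLie, ← lie_skew, neg_smul, smul_neg, neg_neg]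
    rfl
  rw [hT_eq, map_smul, smul_eq_mul, LinearMap.trace_mul_comm]

/-- In an SNLA, the Ricci tensor `ric(x,y) = tr(z ↦ K(x,z)y)` of the
symplectic connection `∇^ω_x y = (2/3) x·y - (1/3) y·x` equals
`(2/9)·tr(ad_x ∘ ad_y)`. -/
theorem snla_stmt_18 (g : Type*) [LieRing g] [LieAlgebra ℝ g]
    [Module.Finite ℝ g]
    (ω : g →ₗ[ℝ] g →ₗ[ℝ] ℝ)
    (hskew : ∀ x y : g, ω x y = - ω y x)
    (hnondeg : ∀ x : g, (∀ y : g, ω x y = 0) → x = 0)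
    (hcocycle : ∀ x y z : g, ω ⁅x, y⁆ z + ω ⁅y, z⁆ x + ω ⁅z, x⁆ y = 0)
    (mul : g →ₗ[ℝ] g →ₗ[ℝ] g)
    (hdef : ∀ x y z : g, ω (mul x y) z = - ω y ⁅x, z⁆)
    (hNov : ∀ x y z : g, mul (mul x y) z = mul (mul x z) y) :
    ∀ (x y : g) (T : g →ₗ[ℝ] g), (∀ z : g, T z = snlaCurvMul mul x z y) →
      LinearMap.trace ℝ g T
        = (2 / 9 : ℝ)
            * LinearMap.trace ℝ g (LieAlgebra.ad ℝ g x * LieAlgebra.ad ℝ g y) :=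
  snla_stmt_18_general g ω hskew hnondeg hcocycle mul hdef hNov
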